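/- For an object M of Prefrag FR the following are equivalent: (1) M lies in the essential image of φ : Glid FR → Prefrag FR (M is a glider representation); (2) the counit of the adjunction ψ ⊣ φ at M, φ(ψ(M)) → M, is an isomorphism; (3) the counit of the adjunction j_L ⊣ j^* at M, j^*(j_L(M)) → M, is an isomorphism; (4) the object j_!(η(M)) of Mod oFF_Λ R lies in Preglid FR. -/

import Mathlib

set_option linter.unusedSectionVars false
set_option maxHeartbeats 1000000
set_option synthInstance.maxHeartbeats 1000000
set_option maxHeartbeats 2000000

noncomputable section

open CategoryTheory CategoryTheory.Limits

universe u

namespace GliderPaper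

/-- A `Γ`-filtration `FR` on a unital ring `R`: additive subgroups `F γ` with
`1 ∈ F 1`, monotone in `γ`, and multiplicative. -/
structure RingFiltration (Γ : Type u) [Group Γ] [PartialOrder Γ] (R : Type u) [Ring R] where
  F : Γ → AddSubgroup R
  one_mem : (1 : R) ∈ F 1
  mono : ∀ {α β : Γ}, α ≤ β → F α ≤ F β
  mul_mem : ∀ {α β : Γ} {a b : R}, a ∈ F α → b ∈ F β → a * b ∈ F (α * β)

variable {Γ : Type u} [Group Γ] [PartialOrder Γ]
  [CovariantClass Γ Γ (· * ·) (· ≤ ·)] [CovariantClass Γ Γ (Function.swap (· * ·)) (· ≤ ·)]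
  {R : Type u} [Ring R]

/-- Objects of the extended filtered companion category `oFF_Λ R`:
the disjoint union `Λ ⊔ {∞}`. -/
inductive OFF (FR : RingFiltration Γ R) (Λ : Set Γ) : Type u
  | of (α : Λ)
  | infty

/-- Objects of the filtered companion category `FF_Λ R`: the set `Λ`. -/
inductive FF (FR : RingFiltration Γ R) (Λ : Set Γ) : Type u
  | of (α : Λ)

variable (FR : RingFiltration Γ R) (Λ : Set Γ)

namespace OFF

/-- `le X Y` holds iff the canonical morphism `1_{X,Y}` is defined, i.e. `X ≤ Y` in `Λ`,
or `Y = ∞`. -/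
def le : OFF FR Λ → OFF FR Λ → Prop
  | of α, of β => (α : Γ) ≤ (β : Γ)
  | _, infty => True
  | infty, of _ => False

open scoped Classical in
/-- The additive subgroup of `R` of morphisms `X ⟶ Y` in `oFF_Λ R`:
`Hom(α,β) = F_{βα⁻¹}R` for `α ≤ β` in `Λ`, `Hom(X,∞) = R`, and `0` otherwise. -/
noncomputable def homGrp : OFF FR Λ → OFF FR Λ → AddSubgroup R
  | of α, of β => if (α : Γ) ≤ (β : Γ) then FR.F ((β : Γ) * (α : Γ)⁻¹) else ⊥
  | _, infty => ⊤
  | infty, of _ => ⊥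

theorem le_refl' : ∀ X : OFF FR Λ, le FR Λ X X
  | of _ => _root_.le_refl _
  | infty => trivial

theorem one_mem_homGrp : ∀ {X Y : OFF FR Λ}, le FR Λ X Y → (1 : R) ∈ homGrp FR Λ X Y
  | of α, of β, h => by
      have h' : (α : Γ) ≤ (β : Γ) := h
      have h1 : (1 : Γ) ≤ (β : Γ) * (α : Γ)⁻¹ := by
        rw [← mul_inv_cancel (α : Γ)]
        exact mul_le_mul_left h' _
      simpa [homGrp, if_pos h'] using FR.mono h1 FR.one_mem
  | of _, infty, _ => trivial
  | infty, infty, _ => trivial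
  | infty, of _, h => h.elim

theorem mul_mem_homGrp : ∀ {X Y Z : OFF FR Λ} {f g : R},
    f ∈ homGrp FR Λ X Y → g ∈ homGrp FR Λ Y Z → g * f ∈ homGrp FR Λ X Z := by
  intro X Y Z f g hf hg
  cases X <;> cases Y <;> cases Z <;> simp only [homGrp] at hf hg ⊢ <;> try trivial
  case of.of.of a b c =>
    by_cases hab : (a : Γ) ≤ (b : Γ)
    · by_cases hbc : (b : Γ) ≤ (c : Γ)
      · rw [if_pos hab] at hf
        rw [if_pos hbc] at hg
        rw [if_pos (le_trans hab hbc)]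
        have := FR.mul_mem hg hf
        rwa [show (c : Γ) * (b : Γ)⁻¹ * ((b : Γ) * (a : Γ)⁻¹) = (c : Γ) * (a : Γ)⁻¹ by
          group] at this
      · rw [if_neg hbc] at hg
        rw [AddSubgroup.mem_bot] at hg
        subst hg
        simp only [zero_mul]
        exact AddSubgroup.zero_mem _
    · rw [if_neg hab] at hf
      rw [AddSubgroup.mem_bot] at hf
      subst hf
      simp only [mul_zero]
      exact AddSubgroup.zero_mem _
  case of.infty.of a c =>
    rw [AddSubgroup.mem_bot] at hg
    subst hg
    simp only [zero_mul]
    exact AddSubgroup.zero_mem _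
  case infty.of.of b c =>
    rw [AddSubgroup.mem_bot] at hf
    subst hf
    simp only [mul_zero]
    exact AddSubgroup.zero_mem _
  case infty.infty.of c =>
    rw [AddSubgroup.mem_bot] at hg
    subst hg
    simp only [zero_mul]
    exact AddSubgroup.zero_mem _

instance : Category (OFF FR Λ) where
  Hom X Y := homGrp FR Λ X Y
  id X := ⟨1, one_mem_homGrp FR Λ (le_refl' FR Λ X)⟩
  comp f g := ⟨g.1 * f.1, mul_mem_homGrp FR Λ f.2 g.2⟩
  id_comp f := Subtype.ext (mul_one f.1)
  comp_id f := Subtype.ext (one_mul f.1)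
  assoc f g h := Subtype.ext (mul_assoc h.1 g.1 f.1).symm

instance : Preadditive (OFF FR Λ) where
  homGroup X Y := inferInstanceAs (AddCommGroup (homGrp FR Λ X Y))
  add_comp _ _ _ f f' g := Subtype.ext (mul_add g.1 f.1 f'.1)
  comp_add _ _ _ f g g' := Subtype.ext (add_mul g.1 g'.1 f.1)

end OFF

namespace FF

/-- The inclusion of the objects of `FF_Λ R` into those of `oFF_Λ R`. -/
def toOFF : FF FR Λ → OFF FR Λ
  | of α => .of α

instance : Category (FF FR Λ) where
  Hom X Y := OFF.homGrp FR Λ (toOFF FR Λ X) (toOFF FR Λ Y)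
  id X := ⟨1, OFF.one_mem_homGrp FR Λ (OFF.le_refl' FR Λ _)⟩
  comp f g := ⟨g.1 * f.1, OFF.mul_mem_homGrp FR Λ f.2 g.2⟩
  id_comp f := Subtype.ext (mul_one f.1)
  comp_id f := Subtype.ext (one_mul f.1)
  assoc f g h := Subtype.ext (mul_assoc h.1 g.1 f.1).symm

instance : Preadditive (FF FR Λ) where
  homGroup X Y := inferInstanceAs (AddCommGroup (OFF.homGrp FR Λ (toOFF FR Λ X) (toOFF FR Λ Y)))
  add_comp _ _ _ f f' g := Subtype.ext (mul_add g.1 f.1 f'.1)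
  comp_add _ _ _ f g g' := Subtype.ext (add_mul g.1 g'.1 f.1)

end FF

/-- The inclusion functor `j : FF_Λ R ⥤ oFF_Λ R`. -/
def jF : FF FR Λ ⥤ OFF FR Λ where
  obj := FF.toOFF FR Λ
  map f := f
  map_id _ := rfl
  map_comp _ _ := rfl

instance : (jF FR Λ).Additive := ⟨rfl⟩

/-- `Mod C`: the category of additive functors from `C` to abelian groups. -/
abbrev Mod (C : Type u) [Category.{u} C] [Preadditive C] : Type (u + 1) :=
  C ⥤+ AddCommGrpCat.{u}

/-- The component at `X` of a morphism in `Mod C`. -/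
def mapp {C : Type u} [Category.{u} C] [Preadditive C] {M N : Mod C} (f : M ⟶ N) (X : C) :
    M.obj.obj X ⟶ N.obj.obj X :=
  (show M.obj ⟶ N.obj from f.hom).app X

/-- The canonical morphism `1_{X,Y}` in `oFF_Λ R`, given by `1_R`. -/
def unitHom (X Y : OFF FR Λ) (h : OFF.le FR Λ X Y) : X ⟶ Y :=
  ⟨1, OFF.one_mem_homGrp FR Λ h⟩

/-- The canonical morphism `1_{α,β}` in `FF_Λ R`, given by `1_R`. -/
def unitHomFF (α β : Λ) (h : (α : Γ) ≤ (β : Γ)) : (FF.of α : FF FR Λ) ⟶ FF.of β :=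
  unitHom FR Λ (.of α) (.of β) h

/-- A module `M` over `oFF_Λ R` is a preglider if all the maps `M(1_{X,Y})` are injective. -/
def IsPreglider (M : Mod (OFF FR Λ)) : Prop :=
  ∀ (X Y : OFF FR Λ) (h : OFF.le FR Λ X Y), Function.Injective (M.obj.map (unitHom FR Λ X Y h))

/-- A module `M` over `FF_Λ R` is a prefragment if all the maps `M(1_{α,β})` are injective. -/
def IsPrefragment (M : Mod (FF FR Λ)) : Prop :=
  ∀ (α β : Λ) (h : (α : Γ) ≤ (β : Γ)), Function.Injective (M.obj.map (unitHomFF FR Λ α β h))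

/-- The category of pregliders: the full subcategory of `Mod (oFF_Λ R)` of pregliders. -/
abbrev Preglid : Type (u + 1) :=
  ObjectProperty.FullSubcategory (fun M : Mod (OFF FR Λ) => IsPreglider FR Λ M)

instance : Preadditive (Preglid FR Λ) := Preadditive.inducedCategory _

/-- The category of prefragments: the full subcategory of `Mod (FF_Λ R)` of prefragments. -/
abbrev Prefrag : Type (u + 1) :=
  ObjectProperty.FullSubcategory (fun M : Mod (FF FR Λ) => IsPrefragment FR Λ M)

instance : Preadditive (Prefrag FR Λ) := Preadditive.inducedCategory _

/-- The inclusion `Preglid FR Λ ⥤ Mod (oFF_Λ R)`. -/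
def iotaF : Preglid FR Λ ⥤ Mod (OFF FR Λ) := ObjectProperty.ι _

/-- The inclusion `Prefrag FR Λ ⥤ Mod (FF_Λ R)`. -/
def etaF : Prefrag FR Λ ⥤ Mod (FF FR Λ) := ObjectProperty.ι _

/-- The component at `X` of a morphism of pregliders. -/
def pgapp {M N : Preglid FR Λ} (f : M ⟶ N) (X : OFF FR Λ) :
    M.obj.obj.obj X ⟶ N.obj.obj.obj X :=
  mapp (show M.obj ⟶ N.obj from f.hom) X

/-- The component at `X` of a morphism of prefragments. -/
def pfapp {M N : Prefrag FR Λ} (f : M ⟶ N) (X : FF FR Λ) :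
    M.obj.obj.obj X ⟶ N.obj.obj.obj X :=
  mapp (show M.obj ⟶ N.obj from f.hom) X

/-- The class `Σ` of morphisms of pregliders all of whose components at objects of `Λ`
are isomorphisms. -/
def SigmaClass : MorphismProperty (Preglid FR Λ) :=
  fun _ _ f => ∀ α : Λ, IsIso (pgapp FR Λ f (.of α))

/-- The category of glider representations: the localization of `Preglid FR Λ` at `Σ`. -/
abbrev Glid : Type (u + 1) := (SigmaClass FR Λ).Localization

/-- The localization functor `Q : Preglid FR Λ ⥤ Glid FR Λ`. -/
def QF : Preglid FR Λ ⥤ Glid FR Λ := (SigmaClass FR Λ).Q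

/-- The restriction functor `j^* : Mod (oFF_Λ R) ⥤ Mod (FF_Λ R)`. -/
def jStar : Mod (OFF FR Λ) ⥤ Mod (FF FR Λ) where
  obj M := ⟨jF FR Λ ⋙ M.obj, by haveI := M.property; exact (inferInstance : (jF FR Λ ⋙ M.obj).Additive)⟩
  map {M N} f := ⟨Functor.whiskerLeft (jF FR Λ) (show M.obj ⟶ N.obj from f.hom)⟩
  map_id _ := rfl
  map_comp _ _ := rfl

theorem isPrefragment_jStar (M : Mod (OFF FR Λ)) (hM : IsPreglider FR Λ M) :
    IsPrefragment FR Λ ((jStar FR Λ).obj M) :=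
  fun α β h => hM (.of α) (.of β) h

/-- The restriction functor `j^* : Preglid FR Λ ⥤ Prefrag FR Λ`. -/
def jRes : Preglid FR Λ ⥤ Prefrag FR Λ where
  obj M := ⟨(jStar FR Λ).obj M.obj, isPrefragment_jStar FR Λ M.obj M.property⟩
  map f := ⟨(jStar FR Λ).map f.hom⟩
  map_id M := InducedCategory.hom_ext ((jStar FR Λ).map_id M.obj)
  map_comp f g := InducedCategory.hom_ext ((jStar FR Λ).map_comp f.hom g.hom)

theorem sigma_isInvertedBy : (SigmaClass FR Λ).IsInvertedBy (jRes FR Λ) := by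
  intro M N f hf
  haveI : (AdditiveFunctor.forget (FF FR Λ) AddCommGrpCat.{u}).Faithful :=
    ObjectProperty.faithful_ι _
  haveI : ∀ X : FF FR Λ, IsIso
      (((ObjectProperty.ι (fun M : Mod (FF FR Λ) => IsPrefragment FR Λ M) ⋙
        AdditiveFunctor.forget _ _).map ((jRes FR Λ).map f)).app X) := by
    rintro ⟨α⟩
    first
    | exact hf α
    | exact @id (IsIso (f.hom.hom.app (OFF.of α))) (hf α)
    | (convert hf α using 1)
  haveI : IsIso ((ObjectProperty.ι (fun M : Mod (FF FR Λ) => IsPrefragment FR Λ M) ⋙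
      AdditiveFunctor.forget _ _).map ((jRes FR Λ).map f)) :=
    NatIso.isIso_of_isIso_app _
  exact isIso_of_reflects_iso ((jRes FR Λ).map f)
    (ObjectProperty.ι (fun M : Mod (FF FR Λ) => IsPrefragment FR Λ M) ⋙
      AdditiveFunctor.forget _ _)

/-- The canonical fully faithful functor `φ : Glid FR Λ ⥤ Prefrag FR Λ`,
the unique functor with `Q ⋙ φ = j^*`. -/
def phiF : Glid FR Λ ⥤ Prefrag FR Λ :=
  Localization.Construction.lift (jRes FR Λ) (sigma_isInvertedBy FR Λ)

theorem phiF_fac : QF FR Λ ⋙ phiF FR Λ = jRes FR Λ :=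
  Localization.Construction.fac _ _

/-!
Besides its left adjoint `j_!`, the restriction `j^*` has a right adjoint, extension by zero
at `∞`, and `j^*` composed with it is the identity; hence `j_!` is fully faithful, i.e.
`M → j^* j_! M` is an isomorphism. The unit of `j_L ⊣ j^*` at `M` is this isomorphism followed
by `j^*` of the reflection `j_! M → κ j_! M`, and the latter is invertible on `Λ` exactly when
`j_! M` is already a preglider: a module mapping to a preglider by a map injective on `Λ` is
itself a preglider. If conversely `M ≅ j^* N` for a preglider `N`, the counit `j_! j^* N → N` is
invertible on `Λ`, so `j_! M` is a preglider. Finally `Q` is essentially surjective with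
`Q ⋙ φ = j^*`, so `φ` and `j^*` have the same essential image, and `ψ ⊣ φ` is the localization
of `j_L ⊣ j^*`, so the two units are invertible at the same objects.
-/

theorem _root_.CategoryTheory.Adjunction.isIso_unit_app_iff_of_adjunction
    {C D : Type*} [Category C] [Category D] {F F' : C ⥤ D} {G : D ⥤ C}
    (adj : F ⊣ G) (adj' : F' ⊣ G) (X : C) :
    IsIso (adj.unit.app X) ↔ IsIso (adj'.unit.app X) := by
  rw [← Adjunction.unit_leftAdjointUniq_hom_app adj adj', isIso_comp_right_iff]

theorem _root_.CategoryTheory.Adjunction.isIso_unit_app_iff_of_isLocalization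
    {C D D' : Type*} [Category C] [Category D] [Category D'] {F : C ⥤ D} {G : D ⥤ C}
    (adj : F ⊣ G) (Q : D ⥤ D') (W : MorphismProperty D) [Q.IsLocalization W]
    {G' : D' ⥤ C} (e : Q ⋙ G' ≅ G) (adj' : F ⋙ Q ⊣ G') (X : C) :
    IsIso (adj'.unit.app X) ↔ IsIso (adj.unit.app X) := by
  have : (𝟭 C).IsLocalization (MorphismProperty.isomorphisms C) :=
    Functor.IsLocalization.for_id _ le_rfl
  let _ : CatCommSq F (𝟭 C) Q (F ⋙ Q) := ⟨(F ⋙ Q).leftUnitor.symm⟩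
  let _ : CatCommSq G Q (𝟭 C) G' := ⟨G.rightUnitor ≪≫ e.symm⟩
  rw [adj'.isIso_unit_app_iff_of_adjunction
    (adj.localization (𝟭 C) (MorphismProperty.isomorphisms C) Q W (F ⋙ Q) G')]
  erw [adj.localization_unit_app]
  simp

section Mod

variable {C : Type u} [Category.{u} C] [Preadditive C]

instance isIso_mapp {M N : Mod C} (f : M ⟶ N) [IsIso f] (X : C) : IsIso (mapp f X) :=
  inferInstanceAs (IsIso ((AdditiveFunctor.forget C AddCommGrpCat).map f |>.app X))

theorem isIso_of_isIso_mapp {M N : Mod C} (f : M ⟶ N) [∀ X, IsIso (mapp f X)] : IsIso f := by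
  have : ∀ X, IsIso (((AdditiveFunctor.forget C AddCommGrpCat).map f).app X) :=
    inferInstanceAs (∀ X, IsIso (mapp f X))
  have : IsIso ((AdditiveFunctor.forget C AddCommGrpCat).map f) := NatIso.isIso_of_isIso_app _
  exact isIso_of_reflects_iso f (AdditiveFunctor.forget C AddCommGrpCat)

theorem mod_hom_ext {M N : Mod C} {f g : M ⟶ N} (h : ∀ X, mapp f X = mapp g X) : f = g :=
  InducedCategory.hom_ext (NatTrans.ext (funext h))

theorem mapp_naturality_apply {M N : Mod C} (f : M ⟶ N) {X Y : C} (g : X ⟶ Y)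
    (x : M.obj.obj X) : mapp f Y (M.obj.map g x) = N.obj.map g (mapp f X x) :=
  NatTrans.naturality_apply f.hom g x

end Mod

theorem isZero_punit : Limits.IsZero (AddCommGrpCat.of PUnit.{u + 1}) :=
  AddCommGrpCat.isZero_of_subsingleton _

def extendByZeroObj (M : Mod (FF FR Λ)) : OFF FR Λ ⥤ AddCommGrpCat.{u} where
  obj
    | .of α => M.obj.obj (.of α)
    | .infty => AddCommGrpCat.of PUnit
  map {X Y} f := match X, Y, f with
    | .of _, .of _, f => M.obj.map f
    | .of _, .infty, _ => 0
    | .infty, _, _ => 0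
  map_id := by
    rintro (α | _)
    exacts [M.obj.map_id _, isZero_punit.eq_of_src _ _]
  map_comp := by
    rintro (α | _) (β | _) (γ | _) f g
    all_goals first
      | exact M.obj.map_comp f g
      | exact isZero_punit.eq_of_src _ _
      | exact isZero_punit.eq_of_tgt _ _
      | skip
    -- the case `α ⟶ ∞ ⟶ γ`, where `Hom(∞, γ) = 0`
    · have := M.property
      obtain rfl : g = 0 := Subtype.ext (AddSubgroup.mem_bot.mp g.2)
      dsimp only
      erw [comp_zero, M.obj.map_zero, comp_zero]

instance (M : Mod (FF FR Λ)) : (extendByZeroObj FR Λ M).Additive where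
  map_add {X Y f g} := by
    have := M.property
    rcases X with α | _ <;> rcases Y with β | _
    exacts [M.obj.map_add, isZero_punit.eq_of_tgt _ _, isZero_punit.eq_of_src _ _,
      isZero_punit.eq_of_src _ _]

def extendByZero : Mod (FF FR Λ) ⥤ Mod (OFF FR Λ) where
  obj M := ⟨extendByZeroObj FR Λ M, (inferInstance : (extendByZeroObj FR Λ M).Additive)⟩
  map {M N} φ := ⟨{
    app
      | .of α => mapp φ (.of α)
      | .infty => 0
    naturality := by
      rintro (α | _) (β | _) f
      exacts [φ.hom.naturality f, isZero_punit.eq_of_tgt _ _, isZero_punit.eq_of_src _ _,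
        isZero_punit.eq_of_src _ _] }⟩
  map_id M := by
    refine mod_hom_ext fun X => ?_
    rcases X with α | _
    exacts [rfl, isZero_punit.eq_of_tgt _ _]
  map_comp f g := by
    refine mod_hom_ext fun X => ?_
    rcases X with α | _
    exacts [rfl, isZero_punit.eq_of_tgt _ _]

def jStarHomEquiv (X : Mod (OFF FR Λ)) (M : Mod (FF FR Λ)) :
    ((jStar FR Λ).obj X ⟶ M) ≃ (X ⟶ (extendByZero FR Λ).obj M) where
  toFun g := ⟨{
    app
      | .of α => mapp g (.of α)
      | .infty => 0
    naturality := by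
      rintro (α | _) (β | _) f
      · exact g.hom.naturality f
      · exact isZero_punit.eq_of_tgt _ _
      · have := X.property
        obtain rfl : f = 0 := Subtype.ext (AddSubgroup.mem_bot.mp f.2)
        erw [X.obj.map_zero, zero_comp, zero_comp]
      · exact isZero_punit.eq_of_tgt _ _ }⟩
  invFun h := ⟨{
    app := fun ⟨α⟩ => mapp h (.of α)
    naturality := fun ⟨_⟩ ⟨_⟩ f => h.hom.naturality f }⟩
  left_inv g := mod_hom_ext fun ⟨_⟩ => rfl
  right_inv h := mod_hom_ext fun X => by
    rcases X with α | _
    exacts [rfl, isZero_punit.eq_of_tgt _ _]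

def jStarAdjExtendByZero : jStar FR Λ ⊣ extendByZero FR Λ :=
  Adjunction.mkOfHomEquiv
    { homEquiv := jStarHomEquiv FR Λ
      homEquiv_naturality_left_symm _ _ := mod_hom_ext fun ⟨_⟩ => rfl
      homEquiv_naturality_right _ _ := mod_hom_ext fun X => by
        rcases X with α | _
        exacts [rfl, isZero_punit.eq_of_tgt _ _] }

instance isIso_jStarAdjExtendByZero_counit : IsIso (jStarAdjExtendByZero FR Λ).counit := by
  have (M : Mod (FF FR Λ)) : IsIso ((jStarAdjExtendByZero FR Λ).counit.app M) := by
    have (X : FF FR Λ) : IsIso (mapp ((jStarAdjExtendByZero FR Λ).counit.app M) X) := by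
      rcases X with ⟨α⟩
      exact inferInstanceAs (IsIso (𝟙 (M.obj.obj (.of α))))
    exact isIso_of_isIso_mapp _
  exact NatIso.isIso_of_isIso_app _

instance isIso_unit_of_adj_jStar {jbang : Mod (FF FR Λ) ⥤ Mod (OFF FR Λ)}
    (adj : jbang ⊣ jStar FR Λ) : IsIso adj.unit :=
  (Adjunction.Triple.isIso_unit_iff_isIso_counit ⟨adj, jStarAdjExtendByZero FR Λ⟩).mpr
    inferInstance

theorem IsPreglider.of_hom {X Y : Mod (OFF FR Λ)} (f : X ⟶ Y) (hY : IsPreglider FR Λ Y)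
    (hf : ∀ α : Λ, Function.Injective (mapp f (.of α))) : IsPreglider FR Λ X := by
  rintro (α | _) Z h
  · refine Function.Injective.of_comp (f := mapp f Z) ?_
    have : mapp f Z ∘ X.obj.map (unitHom FR Λ _ Z h) =
        Y.obj.map (unitHom FR Λ _ Z h) ∘ mapp f _ := funext (mapp_naturality_apply f _)
    exact this ▸ (hY _ Z h).comp (hf α)
  · rcases Z with _ | _
    · exact h.elim
    · exact (X.obj.map_id OFF.infty).symm ▸ Function.injective_id

theorem IsPreglider.of_isIso_jStar_map {X Y : Mod (OFF FR Λ)} (f : X ⟶ Y)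
    [IsIso ((jStar FR Λ).map f)] (hY : IsPreglider FR Λ Y) : IsPreglider FR Λ X :=
  .of_hom FR Λ f hY fun α =>
    (ConcreteCategory.bijective_of_isIso (mapp ((jStar FR Λ).map f) (.of α))).1

instance : (iotaF FR Λ).Full := inferInstanceAs (ObjectProperty.ι _).Full
instance : (iotaF FR Λ).Faithful := inferInstanceAs (ObjectProperty.ι _).Faithful
instance : (etaF FR Λ).Full := inferInstanceAs (ObjectProperty.ι _).Full
instance : (etaF FR Λ).Faithful := inferInstanceAs (ObjectProperty.ι _).Faithful
instance : (QF FR Λ).IsLocalization (SigmaClass FR Λ) :=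
  inferInstanceAs ((SigmaClass FR Λ).Q.IsLocalization _)
instance : (QF FR Λ).EssSurj := Localization.essSurj _ (SigmaClass FR Λ)

theorem isPreglider_iff_isIso_jStar_map_unit_app {κ : Mod (OFF FR Λ) ⥤ Preglid FR Λ}
    (adjκ : κ ⊣ iotaF FR Λ) (X : Mod (OFF FR Λ)) :
    IsPreglider FR Λ X ↔ IsIso ((jStar FR Λ).map (adjκ.unit.app X)) := by
  refine ⟨fun hX => ?_, fun _ =>
    .of_isIso_jStar_map FR Λ (adjκ.unit.app X) (κ.obj X).property⟩
  exact inferInstanceAs (IsIso ((jStar FR Λ).map (adjκ.unit.app ((iotaF FR Λ).obj ⟨X, hX⟩))))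

theorem isPreglider_obj_jStar_obj {jbang : Mod (FF FR Λ) ⥤ Mod (OFF FR Λ)}
    (adjjb : jbang ⊣ jStar FR Λ) (N : Preglid FR Λ) :
    IsPreglider FR Λ (jbang.obj ((jStar FR Λ).obj N.obj)) :=
  have := isIso_of_hom_comp_eq_id _ (adjjb.right_triangle_components N.obj)
  .of_isIso_jStar_map FR Λ (adjjb.counit.app N.obj) N.property

theorem essImage_phiF : (phiF FR Λ).essImage = (jRes FR Λ).essImage := by
  rw [← phiF_fac, Functor.essImage_comp_of_essSurj]

def jLAdjunction {κ : Mod (OFF FR Λ) ⥤ Preglid FR Λ} (adjκ : κ ⊣ iotaF FR Λ)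
    {jbang : Mod (FF FR Λ) ⥤ Mod (OFF FR Λ)} (adjjb : jbang ⊣ jStar FR Λ) :
    (etaF FR Λ ⋙ jbang ⋙ κ) ⊣ jRes FR Λ :=
  (adjjb.comp adjκ).restrictFullyFaithful (.ofFullyFaithful (etaF FR Λ)) (.id _)
    (Functor.rightUnitor _).symm (Iso.refl _)

theorem etaF_map_jLAdjunction_unit_app {κ : Mod (OFF FR Λ) ⥤ Preglid FR Λ}
    (adjκ : κ ⊣ iotaF FR Λ) {jbang : Mod (FF FR Λ) ⥤ Mod (OFF FR Λ)}
    (adjjb : jbang ⊣ jStar FR Λ) (M : Prefrag FR Λ) :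
    (etaF FR Λ).map ((jLAdjunction FR Λ adjκ adjjb).unit.app M) =
      adjjb.unit.app ((etaF FR Λ).obj M) ≫
        (jStar FR Λ).map (adjκ.unit.app (jbang.obj ((etaF FR Λ).obj M))) := by
  erw [jLAdjunction, Adjunction.map_restrictFullyFaithful_unit_app]
  simp only [Functor.rightUnitor_inv_app, Iso.symm_hom, Iso.refl_hom]
  erw [Category.id_comp, Category.comp_id]

theorem isIso_unit_app_iff_isPreglider {κ : Mod (OFF FR Λ) ⥤ Preglid FR Λ}
    (adjκ : κ ⊣ iotaF FR Λ) {jbang : Mod (FF FR Λ) ⥤ Mod (OFF FR Λ)}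
    (adjjb : jbang ⊣ jStar FR Λ) (adjL : (etaF FR Λ ⋙ jbang ⋙ κ) ⊣ jRes FR Λ)
    (M : Prefrag FR Λ) :
    IsIso (adjL.unit.app M) ↔ IsPreglider FR Λ (jbang.obj ((etaF FR Λ).obj M)) := by
  rw [adjL.isIso_unit_app_iff_of_adjunction (jLAdjunction FR Λ adjκ adjjb),
    ← isIso_iff_of_reflects_iso _ (etaF FR Λ), etaF_map_jLAdjunction_unit_app]
  exact (isIso_comp_left_iff _ _).trans
    (isPreglider_iff_isIso_jStar_map_unit_app FR Λ adjκ _).symm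

theorem mem_essImage_phiF_iff_isPreglider {κ : Mod (OFF FR Λ) ⥤ Preglid FR Λ}
    (adjκ : κ ⊣ iotaF FR Λ) {jbang : Mod (FF FR Λ) ⥤ Mod (OFF FR Λ)}
    (adjjb : jbang ⊣ jStar FR Λ) (M : Prefrag FR Λ) :
    (phiF FR Λ).essImage M ↔ IsPreglider FR Λ (jbang.obj ((etaF FR Λ).obj M)) := by
  rw [essImage_phiF]
  constructor
  · rintro ⟨N, ⟨e⟩⟩
    exact .of_isIso_jStar_map FR Λ (jbang.map ((etaF FR Λ).map e.inv))
      (isPreglider_obj_jStar_obj FR Λ adjjb N)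
  · intro hM
    have := (isIso_unit_app_iff_isPreglider FR Λ adjκ adjjb
      (jLAdjunction FR Λ adjκ adjjb) M).2 hM
    exact (jLAdjunction FR Λ adjκ adjjb).mem_essImage_of_unit_isIso M

section Statements

variable {Γ : Type u} [Group Γ] [PartialOrder Γ]
  [CovariantClass Γ Γ (· * ·) (· ≤ ·)] [CovariantClass Γ Γ (Function.swap (· * ·)) (· ≤ ·)]
  {R : Type u} [Ring R]

/-- For an object `M` of `Prefrag FR` the following are equivalent:
(1) `M` lies in the essential image of `φ : Glid FR ⥤ Prefrag FR`;
(2) the counit of the adjunction `ψ ⊣ φ` at `M` is an isomorphism;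
(3) the counit of the adjunction `j_L ⊣ j^*` at `M` is an isomorphism;
(4) `j_!(η(M))` lies in `Preglid FR`.
Here `κ ⊣ ι` and `j_! ⊣ j^*` are arbitrary choices of the adjunctions, `j_L = κ∘j_!∘η`,
`adjL : j_L ⊣ jRes` and `adjPsi : ψ ⊣ φ` (with `ψ = Q∘j_L`) arbitrary witnessing
adjunctions. -/
theorem statement_8 (FR : RingFiltration Γ R) (Λ : Set Γ)
    (κ : Mod (OFF FR Λ) ⥤ Preglid FR Λ) (adjκ : κ ⊣ iotaF FR Λ)
    (jbang : Mod (FF FR Λ) ⥤ Mod (OFF FR Λ)) (adjjb : jbang ⊣ jStar FR Λ)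
    (adjL : (etaF FR Λ ⋙ jbang ⋙ κ) ⊣ jRes FR Λ)
    (adjPsi : ((etaF FR Λ ⋙ jbang ⋙ κ) ⋙ QF FR Λ) ⊣ phiF FR Λ)
    (M : Prefrag FR Λ) :
    -- (2): the canonical comparison morphism between `M` and `φ(ψ(M))` (the unit of
    -- `ψ ⊣ φ` in Mathlib's conventions; the paper calls it the counit) is invertible
    ((phiF FR Λ).essImage M ↔ IsIso (adjPsi.unit.app M)) ∧
    -- (3): the canonical comparison morphism between `M` and `j^*(j_L(M))` is invertible
    ((phiF FR Λ).essImage M ↔ IsIso (adjL.unit.app M)) ∧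
    ((phiF FR Λ).essImage M ↔ IsPreglider FR Λ (jbang.obj ((etaF FR Λ).obj M))) := by
  have h4 := mem_essImage_phiF_iff_isPreglider FR Λ adjκ adjjb M
  have h3 := isIso_unit_app_iff_isPreglider FR Λ adjκ adjjb adjL M
  have h2 := adjL.isIso_unit_app_iff_of_isLocalization (QF FR Λ) (SigmaClass FR Λ)
    (eqToIso (phiF_fac FR Λ)) adjPsi M
  exact ⟨h4.trans (h2.trans h3).symm, h4.trans h3.symm, h4⟩

end Statements

end GliderPaper
end
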